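/- Let v and w be independent, integrable, real-valued random variables on a probability space, and let p be a real number such that P[v ≥ p] = P[w ≤ p]. Then, with r = P[v ≥ w], it holds that r · E[(v − w)·1(w ≤ v)] ≤ 2 · E[(v − w)·1(w ≤ p ∧ p ≤ v)]; in particular, if r > 0 then OPT ≤ (2/r)·GFT(p). -/

import Mathlib

/-!
Split the gain at price `p` according to which side of `p` each valuation lies on:
`(v - w) 1(w ≤ p ≤ v) = 1(w ≤ p) (v - p)⁺ + 1(p ≤ v) (p - w)⁺`. By independence,
`GFT(p) = q (E(v - p)⁺ + E(p - w)⁺)` with `q = P[w ≤ p] = P[v ≥ p]`, while pointwise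
`(v - w) 1(w ≤ v) ≤ (v - p)⁺ + (p - w)⁺` gives `OPT ≤ E(v - p)⁺ + E(p - w)⁺`.
Finally `{w ≤ v} ⊆ {w ≤ p} ∪ {p ≤ v}`, so `r ≤ 2q`.
-/

open MeasureTheory ProbabilityTheory

section
variable {Ω 𝓧 𝓨 : Type*} [MeasurableSpace Ω] [MeasurableSpace 𝓧] [MeasurableSpace 𝓨]
  {μ : Measure Ω}

lemma ProbabilityTheory.IndepFun.integral_indicator_comp_mul_comp {X : Ω → 𝓧} {Y : Ω → 𝓨}
    (hXY : IndepFun X Y μ) (hX : AEMeasurable X μ) (hY : AEMeasurable Y μ)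
    {s : Set 𝓧} (hs : MeasurableSet s) {g : 𝓨 → ℝ} (hg : Measurable g) :
    ∫ ω, s.indicator 1 (X ω) * g (Y ω) ∂μ = μ.real (X ⁻¹' s) * ∫ ω, g (Y ω) ∂μ := by
  rw [hXY.integral_fun_comp_mul_comp hX hY
    (measurable_one.indicator hs).aestronglyMeasurable hg.aestronglyMeasurable]
  congr 1
  change ∫ ω, (X ⁻¹' s).indicator 1 ω ∂μ = _
  rw [integral_indicator₀ (hX.nullMeasurableSet_preimage hs), Pi.one_def, setIntegral_const,
    smul_eq_mul, mul_one]

lemma MeasureTheory.Integrable.indicator_comp_mul {X : Ω → 𝓧} {f : Ω → ℝ} (hf : Integrable f μ)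
    (hX : AEMeasurable X μ) {s : Set 𝓧} (hs : MeasurableSet s) :
    Integrable (fun ω => s.indicator 1 (X ω) * f ω) μ :=
  hf.bdd_mul ((measurable_one.indicator hs).comp_aemeasurable hX).aestronglyMeasurable
    (c := 1) (Filter.Eventually.of_forall fun _ => by
      simpa using norm_indicator_le_norm_self (1 : 𝓧 → ℝ) _)

end

lemma ite_and_sub_eq_indicator_mul_add (x y p : ℝ) :
    (if y ≤ p ∧ p ≤ x then x - y else 0) =
      (Set.Iic p).indicator 1 y * max (x - p) 0 + (Set.Ici p).indicator 1 x * max (p - y) 0 := by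
  by_cases hy : y ≤ p <;> by_cases hx : p ≤ x <;>
    simp [hy, hx, Set.indicator, le_of_lt, not_le.mp]

lemma ite_sub_nonneg (x y : ℝ) : 0 ≤ if y ≤ x then x - y else 0 := by
  split_ifs <;> linarith

lemma ite_sub_le_max_add_max (x y p : ℝ) :
    (if y ≤ x then x - y else 0) ≤ max (x - p) 0 + max (p - y) 0 := by
  split_ifs
  · linarith [le_max_left (x - p) 0, le_max_left (p - y) 0]
  · positivity

section
variable {Ω : Type*} [MeasurableSpace Ω] {μ : Measure Ω} [IsFiniteMeasure μ] {v w : Ω → ℝ}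

lemma ProbabilityTheory.IndepFun.integral_ite_and_sub_eq (hvw : IndepFun v w μ) (hvi : Integrable v μ)
    (hwi : Integrable w μ) (p : ℝ) :
    ∫ ω, (if w ω ≤ p ∧ p ≤ v ω then v ω - w ω else 0) ∂μ =
      μ.real {ω | w ω ≤ p} * ∫ ω, max (v ω - p) 0 ∂μ +
        μ.real {ω | p ≤ v ω} * ∫ ω, max (p - w ω) 0 ∂μ := by
  have hv := hvi.aemeasurable
  have hw := hwi.aemeasurable
  have hvp : Integrable (fun ω => max (v ω - p) 0) μ := (hvi.sub (integrable_const p)).pos_part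
  have hwp : Integrable (fun ω => max (p - w ω) 0) μ := ((integrable_const p).sub hwi).pos_part
  simp_rw [ite_and_sub_eq_indicator_mul_add]
  rw [integral_add (hvp.indicator_comp_mul hw measurableSet_Iic)
      (hwp.indicator_comp_mul hv measurableSet_Ici),
    hvw.symm.integral_indicator_comp_mul_comp hw hv measurableSet_Iic
      (g := fun x => max (x - p) 0) (by fun_prop),
    hvw.integral_indicator_comp_mul_comp hv hw measurableSet_Ici
      (g := fun y => max (p - y) 0) (by fun_prop)]
  rfl

lemma integral_ite_sub_le (hvi : Integrable v μ) (hwi : Integrable w μ) (p : ℝ) :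
    ∫ ω, (if w ω ≤ v ω then v ω - w ω else 0) ∂μ ≤
      ∫ ω, max (v ω - p) 0 ∂μ + ∫ ω, max (p - w ω) 0 ∂μ := by
  have hvp : Integrable (fun ω => max (v ω - p) 0) μ := (hvi.sub (integrable_const p)).pos_part
  have hwp : Integrable (fun ω => max (p - w ω) 0) μ := ((integrable_const p).sub hwi).pos_part
  rw [← integral_add hvp hwp]
  exact integral_mono_of_nonneg (.of_forall fun ω => ite_sub_nonneg _ _) (hvp.add hwp)
    (.of_forall fun ω => ite_sub_le_max_add_max _ _ p)

lemma measureReal_setOf_le_le_add (p : ℝ) :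
    μ.real {ω | w ω ≤ v ω} ≤ μ.real {ω | w ω ≤ p} + μ.real {ω | p ≤ v ω} := by
  refine (measureReal_mono fun ω (hω : w ω ≤ v ω) => ?_).trans (measureReal_union_le _ _)
  exact (le_or_gt (w ω) p).imp id fun h => h.le.trans hω

end

theorem stmt1_general {Ω : Type*} [MeasurableSpace Ω] (μ : Measure Ω) [IsProbabilityMeasure μ]
    (v w : Ω → ℝ)
    (hvi : Integrable v μ) (hwi : Integrable w μ)
    (hindep : IndepFun v w μ) (p : ℝ)
    (hp : (μ {ω | p ≤ v ω}).toReal = (μ {ω | w ω ≤ p}).toReal)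
    (r : ℝ) (hr : r = (μ {ω | w ω ≤ v ω}).toReal) :
    (r * ∫ ω, (if w ω ≤ v ω then v ω - w ω else 0) ∂μ ≤
        2 * ∫ ω, (if w ω ≤ p ∧ p ≤ v ω then v ω - w ω else 0) ∂μ) ∧
      (0 < r →
        ∫ ω, (if w ω ≤ v ω then v ω - w ω else 0) ∂μ ≤
          (2 / r) * ∫ ω, (if w ω ≤ p ∧ p ≤ v ω then v ω - w ω else 0) ∂μ) := by
  set q := μ.real {ω | w ω ≤ p}
  have hq : μ.real {ω | p ≤ v ω} = q := hp
  have hr2q : r ≤ q + q := hr ▸ (measureReal_setOf_le_le_add p).trans_eq (by rw [hq])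
  have hgain := hindep.integral_ite_and_sub_eq hvi hwi p
  rw [hq, ← mul_add] at hgain
  have hopt_nonneg : 0 ≤ ∫ ω, (if w ω ≤ v ω then v ω - w ω else 0) ∂μ :=
    integral_nonneg fun ω => ite_sub_nonneg _ _
  have hmain : r * ∫ ω, (if w ω ≤ v ω then v ω - w ω else 0) ∂μ ≤
      2 * ∫ ω, (if w ω ≤ p ∧ p ≤ v ω then v ω - w ω else 0) ∂μ :=
    calc r * ∫ ω, (if w ω ≤ v ω then v ω - w ω else 0) ∂μ
        ≤ (q + q) * (∫ ω, max (v ω - p) 0 ∂μ + ∫ ω, max (p - w ω) 0 ∂μ) :=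
          mul_le_mul hr2q (integral_ite_sub_le hvi hwi p) hopt_nonneg (by positivity)
      _ = 2 * ∫ ω, (if w ω ≤ p ∧ p ≤ v ω then v ω - w ω else 0) ∂μ := by rw [hgain]; ring
  refine ⟨hmain, fun hr0 => ?_⟩
  rwa [div_mul_eq_mul_div, le_div_iff₀ hr0, mul_comm]

theorem stmt1 {Ω : Type*} [MeasurableSpace Ω] (μ : Measure Ω) [IsProbabilityMeasure μ]
    (v w : Ω → ℝ) (hv : Measurable v) (hw : Measurable w)
    (hvi : Integrable v μ) (hwi : Integrable w μ)
    (hindep : IndepFun v w μ) (p : ℝ)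
    (hp : (μ {ω | p ≤ v ω}).toReal = (μ {ω | w ω ≤ p}).toReal)
    (r : ℝ) (hr : r = (μ {ω | w ω ≤ v ω}).toReal) :
    (r * ∫ ω, (if w ω ≤ v ω then v ω - w ω else 0) ∂μ ≤
        2 * ∫ ω, (if w ω ≤ p ∧ p ≤ v ω then v ω - w ω else 0) ∂μ) ∧
      (0 < r →
        ∫ ω, (if w ω ≤ v ω then v ω - w ω else 0) ∂μ ≤
          (2 / r) * ∫ ω, (if w ω ≤ p ∧ p ≤ v ω then v ω - w ω else 0) ∂μ) :=
  stmt1_general μ v w hvi hwi hindep p hp r hr
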